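/- Let n ≥ 2 and let p be a positive probability vector on Fin n. For a permutation σ of Fin n define the Plackett–Luce weight w_p(σ) = Π_{i=0}^{n−1} p(σ(i)) / (Σ_{j=i}^{n−1} p(σ(j))). Then for all i ≠ j in Fin n, Σ_σ w_p(σ) · [σ⁻¹(i) < σ⁻¹(j)] = p(i)/(p(i)+p(j)), where the sum ranges over all permutations σ of Fin n and [·] is the 0/1 indicator. -/

import Mathlib

/-!
Rank by drawing the first-place alternative `a` with probability `p a / ∑ p`, then ranking the
rest recursively: this is exactly the factorisation of the Plackett–Luce weight along
`Equiv.Perm.decomposeFin`. Conditioning on the first choice `a`, the event "`i` before `j`"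
is certain if `a = i`, impossible if `a = j`, and otherwise is the same event for the remaining
alternatives, which by induction has probability `p i / (p i + p j)`. Hence the total is
`(p i + (S - p i - p j) · p i / (p i + p j)) / S = p i / (p i + p j)` with `S = ∑ p`.
-/

open Finset Equiv Equiv.Perm

noncomputable def plackettLuce {n : ℕ} (p : Fin n → ℝ) (σ : Perm (Fin n)) : ℝ :=
  ∏ i : Fin n, p (σ i) / ∑ j ∈ univ.filter (fun j : Fin n => i ≤ j), p (σ j)

theorem sum_perm_fin_succ {M : Type*} [AddCommMonoid M] {n : ℕ} (f : Perm (Fin (n + 1)) → M) :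
    ∑ σ, f σ = ∑ a, ∑ e : Perm (Fin n), f (decomposeFin.symm (a, e)) := by
  rw [← decomposeFin.symm.sum_comp, Fintype.sum_prod_type]

theorem decomposeFin_symm_inv_apply_self {n : ℕ} (a : Fin (n + 1)) (e : Perm (Fin n)) :
    (decomposeFin.symm (a, e))⁻¹ a = 0 := by
  rw [inv_eq_iff_eq, decomposeFin_symm_apply_zero]

theorem decomposeFin_symm_inv_apply_swap_succ {n : ℕ} (a : Fin (n + 1)) (e : Perm (Fin n))
    (k : Fin n) : (decomposeFin.symm (a, e))⁻¹ (swap 0 a k.succ) = (e⁻¹ k).succ := by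
  rw [inv_eq_iff_eq, decomposeFin_symm_apply_succ, ← Perm.mul_apply, mul_inv_cancel,
    Perm.one_apply]

theorem plackettLuce_decomposeFin_symm {n : ℕ} (p : Fin (n + 1) → ℝ) (a : Fin (n + 1))
    (e : Perm (Fin n)) :
    plackettLuce p (decomposeFin.symm (a, e)) =
      (p a / ∑ k, p k) * plackettLuce (p ∘ swap 0 a ∘ Fin.succ) e := by
  set σ := decomposeFin.symm (a, e)
  rw [plackettLuce, Fin.prod_univ_succ]
  congr 1
  · have hall : univ.filter (fun j : Fin (n + 1) => 0 ≤ j) = univ := by simp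
    rw [decomposeFin_symm_apply_zero, hall, Equiv.sum_comp σ p]
  · refine prod_congr rfl fun i _ => ?_
    have htail : ∑ j ∈ univ.filter (fun j : Fin (n + 1) => i.succ ≤ j), p (σ j) =
        ∑ j ∈ univ.filter (fun j : Fin n => i ≤ j), p (swap 0 a (e j).succ) := by
      rw [sum_filter, sum_filter, Fin.sum_univ_succ, if_neg (by simp)]
      simp [σ, decomposeFin_symm_apply_succ]
    rw [htail, decomposeFin_symm_apply_succ]
    rfl

theorem sum_plackettLuce_eq_one {n : ℕ} (p : Fin n → ℝ) (hp : ∀ i, 0 < p i) :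
    ∑ σ, plackettLuce p σ = 1 := by
  induction n with
  | zero => simp [plackettLuce]
  | succ n ih =>
    have hS : ∑ k, p k ≠ 0 := (sum_pos (fun k _ => hp k) univ_nonempty).ne'
    have htail (a : Fin (n + 1)) : ∑ e, plackettLuce (p ∘ swap 0 a ∘ Fin.succ) e = 1 :=
      ih _ fun _ => hp _
    simp_rw [sum_perm_fin_succ, plackettLuce_decomposeFin_symm, ← mul_sum, htail, mul_one,
      ← sum_div, div_self hS]

section FirstChoice

variable {n : ℕ} (p : Fin (n + 1) → ℝ) (i j : Fin (n + 1))

theorem sum_plackettLuce_mul_prefers_of_first_eq_left (hp : ∀ k, 0 < p k) (hij : i ≠ j) :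
    ∑ e : Perm (Fin n), plackettLuce p (decomposeFin.symm (i, e)) *
      (if (decomposeFin.symm (i, e))⁻¹ i < (decomposeFin.symm (i, e))⁻¹ j then 1 else 0) =
      p i / ∑ k, p k := by
  have hfirst (e : Perm (Fin n)) :
      (decomposeFin.symm (i, e))⁻¹ i < (decomposeFin.symm (i, e))⁻¹ j := by
    rw [decomposeFin_symm_inv_apply_self, Fin.pos_iff_ne_zero, Ne, inv_eq_iff_eq,
      decomposeFin_symm_apply_zero]
    exact hij.symm
  simp_rw [hfirst, if_true, mul_one, plackettLuce_decomposeFin_symm, ← mul_sum,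
    sum_plackettLuce_eq_one (p ∘ swap 0 i ∘ Fin.succ) fun _ => hp _, mul_one]

theorem sum_plackettLuce_mul_prefers_of_first_eq_right :
    ∑ e : Perm (Fin n), plackettLuce p (decomposeFin.symm (j, e)) *
      (if (decomposeFin.symm (j, e))⁻¹ i < (decomposeFin.symm (j, e))⁻¹ j then 1 else 0) =
      0 := by
  simp [decomposeFin_symm_inv_apply_self]

theorem sum_plackettLuce_mul_prefers_of_first_eq (a : Fin (n + 1)) (i' j' : Fin n) :
    ∑ e : Perm (Fin n), plackettLuce p (decomposeFin.symm (a, e)) *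
      (if (decomposeFin.symm (a, e))⁻¹ (swap 0 a i'.succ) <
        (decomposeFin.symm (a, e))⁻¹ (swap 0 a j'.succ) then 1 else 0) =
      (p a / ∑ k, p k) * ∑ e : Perm (Fin n), plackettLuce (p ∘ swap 0 a ∘ Fin.succ) e *
        (if e⁻¹ i' < e⁻¹ j' then 1 else 0) := by
  simp_rw [decomposeFin_symm_inv_apply_swap_succ, Fin.succ_lt_succ_iff,
    plackettLuce_decomposeFin_symm, mul_assoc, ← mul_sum]

end FirstChoice

theorem sum_plackettLuce_mul_prefers {n : ℕ} (p : Fin n → ℝ) (hp : ∀ k, 0 < p k)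
    {i j : Fin n} (hij : i ≠ j) :
    ∑ σ, plackettLuce p σ * (if σ⁻¹ i < σ⁻¹ j then 1 else 0) = p i / (p i + p j) := by
  induction n with
  | zero => exact i.elim0
  | succ n ih =>
    have hS : 0 < ∑ k, p k := sum_pos (fun k _ => hp k) univ_nonempty
    have hpij : 0 < p i + p j := add_pos (hp i) (hp j)
    have hother (a : Fin (n + 1)) (ha : a ∈ ({i, j} : Finset _)ᶜ) :
        ∑ e : Perm (Fin n), plackettLuce p (decomposeFin.symm (a, e)) *
          (if (decomposeFin.symm (a, e))⁻¹ i < (decomposeFin.symm (a, e))⁻¹ j then 1 else 0) =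
          (p a / ∑ k, p k) * (p i / (p i + p j)) := by
      simp only [mem_compl, mem_insert, mem_singleton, not_or] at ha
      have hne (k : Fin (n + 1)) (hk : a ≠ k) : swap 0 a k ≠ 0 := by
        rw [Ne, swap_apply_eq_iff, swap_apply_left]
        exact hk.symm
      obtain ⟨i', hi'⟩ := Fin.exists_succ_eq.2 (hne i ha.1)
      obtain ⟨j', hj'⟩ := Fin.exists_succ_eq.2 (hne j ha.2)
      have hi : swap 0 a i'.succ = i := by rw [hi', swap_apply_self]
      have hj : swap 0 a j'.succ = j := by rw [hj', swap_apply_self]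
      have hij' : i' ≠ j' := fun h => hij (by rw [← hi, ← hj, h])
      rw [← hi, ← hj, sum_plackettLuce_mul_prefers_of_first_eq,
        ih (p ∘ swap 0 a ∘ Fin.succ) (fun _ => hp _) hij']
      rfl
    have hrest : ∑ a ∈ ({i, j} : Finset _)ᶜ, p a = ∑ k, p k - p i - p j := by
      rw [← sum_add_sum_compl {i, j} p, sum_pair hij]
      ring
    rw [sum_perm_fin_succ, ← sum_add_sum_compl {i, j}, sum_pair hij,
      sum_plackettLuce_mul_prefers_of_first_eq_left p i j hp hij,
      sum_plackettLuce_mul_prefers_of_first_eq_right, sum_congr rfl hother, ← sum_mul,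
      ← sum_div, hrest]
    field_simp
    ring

theorem plackettLuce_reproduces_pairwise_opinions_general (n : ℕ)
    (p : Fin n → ℝ) (hp : ∀ i, 0 < p i)
    (w : Equiv.Perm (Fin n) → ℝ)
    (hw : ∀ σ : Equiv.Perm (Fin n),
      w σ = ∏ i : Fin n,
        p (σ i) / ∑ j ∈ Finset.univ.filter (fun j : Fin n => i ≤ j), p (σ j)) :
    ∀ i j : Fin n, i ≠ j →
      ∑ σ : Equiv.Perm (Fin n), w σ * (if σ⁻¹ i < σ⁻¹ j then (1 : ℝ) else 0) =
        p i / (p i + p j) := by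
  rw [show w = plackettLuce p from funext hw]
  exact fun i j hij => sum_plackettLuce_mul_prefers p hp hij

/-- **Lemma 5 (situational expert graph to rankings).** For a positive probability vector
`p` on `Fin n` (`n ≥ 2`), the Plackett–Luce distribution
`w_p σ = ∏_{i} p (σ i) / (∑_{j ≥ i} p (σ j))` on rankings reproduces the pairwise opinions:
for all `i ≠ j`, `∑_σ w_p σ · [σ⁻¹ i < σ⁻¹ j] = p i / (p i + p j)`. -/
theorem plackettLuce_reproduces_pairwise_opinions (n : ℕ) (hn : 2 ≤ n)
    (p : Fin n → ℝ) (hp : ∀ i, 0 < p i) (hsum : ∑ i, p i = 1)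
    (w : Equiv.Perm (Fin n) → ℝ)
    (hw : ∀ σ : Equiv.Perm (Fin n),
      w σ = ∏ i : Fin n,
        p (σ i) / ∑ j ∈ Finset.univ.filter (fun j : Fin n => i ≤ j), p (σ j)) :
    ∀ i j : Fin n, i ≠ j →
      ∑ σ : Equiv.Perm (Fin n), w σ * (if σ⁻¹ i < σ⁻¹ j then (1 : ℝ) else 0) =
        p i / (p i + p j) :=
  plackettLuce_reproduces_pairwise_opinions_general n p hp w hw
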